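/- Let $n, d, c, p, i$ be integers with $0 \le d < n$, $1 \le c \le p \le n-d$ and $0 \le i \le d$, and let $\tau \in \bar{\mathcal{S}}_p(n,d)$. If the $+$-component $\mathcal{C}^{\tau}_i$ has size $c$ and contains a $+$-subset $B$ with elements $b_1 < \dots < b_d$, then: (a) for all $j \in [i]$, $b_j \le c + j - 1$ and the $(\tau,B,j)$-series is left-aligned; (b) for all $j \in [i+1,d]$, $b_j \ge n - (c+d-j) + 1$ and the $(\tau,B,j)$-series is right-aligned. -/

import Mathlib

/-! Common definitions: signotopes and co-signotopes on `[n] = {1, …, n}` (encoded as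
`Finset.Icc 1 n` in `ℕ`), sign functions are `Finset ℕ → Bool` (`true` = `+`, `false` = `-`)
that vanish (are `-`) away from the relevant subsets. -/

open Classical in
/-- The sign function with `+`-set `S` (and `-` elsewhere). -/
noncomputable def ofPlusSet (S : Set (Finset ℕ)) : Finset ℕ → Bool :=
  fun A => if A ∈ S then true else false

/-- Number of sign changes in a list of signs. -/
def signChanges (l : List Bool) : ℕ :=
  ((l.zip l.tail).filter fun p => p.1 ≠ p.2).length

/-- Number of `+`-subsets of a sign function. -/
noncomputable def plusCount (τ : Finset ℕ → Bool) : ℕ :=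
  {A : Finset ℕ | τ A = true}.ncard

/-- The series of signs `τ (C ∪ {x})` for `x ∈ [n] \ C` in increasing order.
For a `d`-subset `B` with `i`-th smallest element `b`, `series n τ (B.erase b)` is
the `(τ,B,i)`-series. -/
def series (n : ℕ) (τ : Finset ℕ → Bool) (C : Finset ℕ) : List Bool :=
  ((Finset.Icc 1 n \ C).sort (· ≤ ·)).map fun x => τ (insert x C)

/-- An `r`-signotope on `[n]`, encoded as a sign function on all of `Finset ℕ`
which is `-` away from the `r`-subsets of `[n]`. -/
def IsSignotope (n r : ℕ) (σ : Finset ℕ → Bool) : Prop :=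
  (∀ A, σ A = true → A ⊆ Finset.Icc 1 n ∧ A.card = r) ∧
  ∀ X : Finset ℕ, X ⊆ Finset.Icc 1 n → X.card = r + 1 →
    signChanges ((X.sort (· ≤ ·)).map fun x => σ (X.erase x)) ≤ 1

/-- A `d`-co-signotope on `[n]`: every `(τ,B,i)`-series has at most one sign change. -/
def IsCoSignotope (n d : ℕ) (τ : Finset ℕ → Bool) : Prop :=
  (∀ A, τ A = true → A ⊆ Finset.Icc 1 n ∧ A.card = d) ∧
  ∀ B : Finset ℕ, B ⊆ Finset.Icc 1 n → B.card = d → ∀ b ∈ B,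
    signChanges (series n τ (B.erase b)) ≤ 1

/-- `𝒮_p(n,r)`: `r`-signotopes on `[n]` with exactly `p` `+`-signs. -/
noncomputable def sigSet (n r p : ℕ) : Set (Finset ℕ → Bool) :=
  {σ | IsSignotope n r σ ∧ plusCount σ = p}

/-- `𝒮_{≤p}(n,r)`. -/
noncomputable def sigSetLe (n r p : ℕ) : Set (Finset ℕ → Bool) :=
  {σ | IsSignotope n r σ ∧ plusCount σ ≤ p}

/-- `𝒮̄_p(n,d)`: `d`-co-signotopes on `[n]` with exactly `p` `+`-subsets. -/
noncomputable def coSigSet (n d p : ℕ) : Set (Finset ℕ → Bool) :=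
  {τ | IsCoSignotope n d τ ∧ plusCount τ = p}

/-- `𝒮̄_{≤p}(n,d)`. -/
noncomputable def coSigSetLe (n d p : ℕ) : Set (Finset ℕ → Bool) :=
  {τ | IsCoSignotope n d τ ∧ plusCount τ ≤ p}

/-- `σ` and `τ` differ by a single step: `σ⁻¹(+) ⊊ τ⁻¹(+)` and `|τ⁻¹(+)| = |σ⁻¹(+)| + 1`. -/
noncomputable def SingleStep (σ τ : Finset ℕ → Bool) : Prop :=
  {A | σ A = true} ⊂ {A | τ A = true} ∧ plusCount τ = plusCount σ + 1

/-- The higher Bruhat order on `r`-signotopes on `[n]`: reflexive-transitive closure of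
the single step relation. -/
noncomputable def BruhatLe (n r : ℕ) (σ τ : Finset ℕ → Bool) : Prop :=
  Relation.ReflTransGen (fun a b => IsSignotope n r a ∧ IsSignotope n r b ∧ SingleStep a b) σ τ

/-- The complementary higher Bruhat order on `d`-co-signotopes on `[n]`. -/
noncomputable def CoBruhatLe (n d : ℕ) (σ τ : Finset ℕ → Bool) : Prop :=
  Relation.ReflTransGen (fun a b => IsCoSignotope n d a ∧ IsCoSignotope n d b ∧ SingleStep a b) σ τ

/-- Adjacency in the graph `G_{n,d}`: `B' = (B \ {x}) ∪ {y}` with no element of `B \ {x}`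
strictly between `x` and `y`. -/
def GAdj (n d : ℕ) (B B' : Finset ℕ) : Prop :=
  B ⊆ Finset.Icc 1 n ∧ B.card = d ∧ B' ⊆ Finset.Icc 1 n ∧ B'.card = d ∧
  ∃ x ∈ B, ∃ y ∈ Finset.Icc 1 n, y ∉ B ∧ B' = insert y (B.erase x) ∧
    ∀ z ∈ B.erase x, ¬(min x y < z ∧ z < max x y)

/-- The source subset `S_{n,d,i} = {1,…,i} ∪ {n-d+i+1,…,n}`. -/
def sourceSubset (n d i : ℕ) : Finset ℕ :=
  Finset.Icc 1 i ∪ Finset.Icc (n - d + i + 1) n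

/-- Connectivity inside the `+`-subsets of `τ` (the induced subgraph `G_{n,d}[τ]`). -/
def plusConn (n d : ℕ) (τ : Finset ℕ → Bool) : Finset ℕ → Finset ℕ → Prop :=
  Relation.ReflTransGen fun A A' => τ A = true ∧ τ A' = true ∧ GAdj n d A A'

/-- The vertex set `𝒞^τ_i` of the `+`-component of `τ` containing `S_{n,d,i}`
(empty if `S_{n,d,i}` is not a `+`-subset). -/
def comp (n d : ℕ) (τ : Finset ℕ → Bool) (i : ℕ) : Set (Finset ℕ) :=
  {B | τ (sourceSubset n d i) = true ∧ τ B = true ∧ plusConn n d τ (sourceSubset n d i) B}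

/-- The `j`-th smallest element (1-based) of a finite set of naturals. -/
def nthElt (B : Finset ℕ) (j : ℕ) : ℕ := (B.sort (· ≤ ·)).getD (j - 1) 0

/-- `b_j` with the conventions `b_0 = 0` and `b_{d+1} = n+1` (as an integer). -/
def extNth (n d : ℕ) (B : Finset ℕ) (j : ℕ) : ℤ :=
  if j = 0 then 0 else if j ≤ d then (nthElt B j : ℤ) else (n : ℤ) + 1

/-- A series is left-aligned if it starts with `+` and ends with `-`. -/
def LeftAligned (l : List Bool) : Prop :=
  l.head? = some true ∧ l.getLast? = some false

/-- A series is right-aligned if it starts with `-` and ends with `+`. -/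
def RightAligned (l : List Bool) : Prop :=
  l.head? = some false ∧ l.getLast? = some true

/-- `𝒮̄_{p,i}(n,d)`: co-signotopes in `𝒮̄_p(n,d)` whose only nonempty `+`-component
is `𝒞^τ_i` (i.e. every `+`-subset lies in `𝒞^τ_i`). -/
noncomputable def coSigOnly (n d p i : ℕ) : Set (Finset ℕ → Bool) :=
  {τ | IsCoSignotope n d τ ∧ plusCount τ = p ∧ ∀ B, τ B = true → B ∈ comp n d τ i}

/-- `Z(d,i)`: points `(a_1,…,a_d) ∈ ℤ_{>0}^d` (0-indexed in Lean) with `a_j ≥ a_{j-1}`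
for `j ∈ [2,i]` and `a_j ≥ a_{j+1}` for `j ∈ [i+1,d-1]` (1-based indices). -/
def ZSet (d i : ℕ) : Set (Fin d → ℤ) :=
  {a | (∀ j, 0 < a j) ∧
    (∀ j k : Fin d, (j : ℕ) + 1 = (k : ℕ) → (k : ℕ) + 1 ≤ i → a j ≤ a k) ∧
    (∀ j k : Fin d, (j : ℕ) + 1 = (k : ℕ) → i ≤ (j : ℕ) → a k ≤ a j)}

/-- A `(d,i)`-Ferrers diagram with respect to `p`. -/
def IsFerrers (d i p : ℕ) (F : Set (Fin d → ℤ)) : Prop :=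
  F ⊆ ZSet d i ∧ F.ncard = p ∧
  ∀ a ∈ F, ∀ a' ∈ ZSet d i, (∀ j, a' j ≤ a j) → a' ∈ F

/-- The number of `(d,i)`-Ferrers diagrams with respect to `p`. -/
noncomputable def ferrersCount (d i p : ℕ) : ℕ :=
  {F : Set (Fin d → ℤ) | IsFerrers d i p F}.ncard

/-- `f_{n,d,i,j}` (here `j` is the 1-based coordinate index). -/
def fFun (n d i j : ℕ) (x : ℕ) : ℤ :=
  if j ≤ i then (x : ℤ) - j + 1 else ((n : ℤ) - x) - ((d : ℤ) - j) + 1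

/-- `g_{n,d,i}` maps a `d`-subset `B = (b_1 < … < b_d)` to
`(f_{n,d,i,1}(b_1), …, f_{n,d,i,d}(b_d))`. -/
def gMap (n d i : ℕ) (B : Finset ℕ) : Fin d → ℤ :=
  fun k => fFun n d i ((k : ℕ) + 1) (nthElt B ((k : ℕ) + 1))

/-- A sparse composition of `p` of length `d+1`. -/
def IsSparseComposition (d p : ℕ) (c : Fin (d + 1) → ℕ) : Prop :=
  (∑ i, c i) = p ∧
  ∀ i : Fin (d + 1), 1 ≤ (i : ℕ) →
    c i = 0 ∨ c ⟨(i : ℕ) - 1, lt_of_le_of_lt (Nat.sub_le _ _) i.isLt⟩ = 0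

/-- The component `τ_i` of the `+`-component decomposition `Δ(τ)`:
the sign function whose `+`-set is `𝒞^τ_i`. -/
noncomputable def compFun (n d : ℕ) (τ : Finset ℕ → Bool) (i : ℕ) : Finset ℕ → Bool :=
  ofPlusSet (comp n d τ i)

/-- Keep the `i` smallest elements of `B` and shift the others by `ñ - n`
(this is `g⁻¹_{ñ,d,i} ∘ g_{n,d,i}` on `d`-subsets). -/
def gammaSet (n tn i : ℕ) (B : Finset ℕ) : Finset ℕ :=
  ((B.sort (· ≤ ·)).mapIdx fun k x => if k < i then x else x + tn - n).toFinset

/-- The map `h_{n,ñ,d,p,i}` on sign functions. -/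
noncomputable def hFun (n tn i : ℕ) (τ : Finset ℕ → Bool) : Finset ℕ → Bool :=
  ofPlusSet {A | ∃ B, τ B = true ∧ A = gammaSet n tn i B}

open Classical in
/-- `γ_{τ,ñ}(B)`: replace `b_j` by `b_j + ñ - n` whenever the `(τ,B,j)`-series is
right-aligned. -/
noncomputable def gammaFun (n tn : ℕ) (τ : Finset ℕ → Bool) (B : Finset ℕ) : Finset ℕ :=
  B.image fun x => if RightAligned (series n τ (B.erase x)) then x + tn - n else x

/-- The simple bijection `φ_{n,ñ,d,p}` on sign functions. -/
noncomputable def phiFun (n tn : ℕ) (τ : Finset ℕ → Bool) : Finset ℕ → Bool :=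
  ofPlusSet {A | ∃ B, τ B = true ∧ A = gammaFun n tn τ B}

/-!
Every `+`-subset `B` of a co-signotope with at most `n - d` `+`-subsets has a left- or
right-aligned `(τ,B,j)`-series at each of its elements: the series has a `+` at `b_j`, it
cannot consist of `+` only, and it changes sign at most once. Replacing an element of `B` by a
value on the same side of `b_j`, through an edge of `G_{n,d}` inside the `+`-subsets, keeps the
kind of alignment at `b_j`, since a switch would exhibit at least `n - d + 1` `+`-subsets. At the
source subset the alignment is read off from the first or last entry of the series, so along the
component every `B ∈ 𝒞^τ_i` is left-aligned at `b_1, …, b_i` and right-aligned at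
`b_{i+1}, …, b_d`.

Left alignment at `b_j` lets `b_j` slide down by one inside the component (and right alignment
lets it slide up) whenever the target is free; freeing it by first sliding the neighbouring
element, `b_j` attains every value in `[j, b_j]` (resp. `[b_j, n - d + j]`) within `𝒞^τ_i`,
which bounds `|𝒞^τ_i|` from below.
-/

theorem signChanges_cons_cons (x y : Bool) (t : List Bool) :
    signChanges (x :: y :: t) = (if x = y then 0 else 1) + signChanges (y :: t) := by
  by_cases h : x = y <;> simp [signChanges, h]; omega

theorem pairwise_eq_of_signChanges_eq_zero :
    ∀ {l : List Bool}, signChanges l = 0 → l.Pairwise (· = ·)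
  | [], _ => List.Pairwise.nil
  | [_], _ => List.pairwise_singleton _ _
  | x :: y :: t, h => by
    rw [signChanges_cons_cons] at h
    obtain rfl : x = y := by by_contra hxy; simp [hxy] at h
    have ih := pairwise_eq_of_signChanges_eq_zero (l := x :: t) (by omega)
    exact ih.cons (by simpa using (List.pairwise_cons.mp ih).1)

theorem pairwise_le_or_pairwise_ge_of_signChanges_le_one :
    ∀ {l : List Bool}, signChanges l ≤ 1 → l.Pairwise (· ≤ ·) ∨ l.Pairwise (· ≥ ·)
  | [], _ => Or.inl List.Pairwise.nil
  | [_], _ => Or.inl (List.pairwise_singleton _ _)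
  | x :: y :: t, h => by
    rw [signChanges_cons_cons] at h
    by_cases hxy : x = y
    · subst hxy
      rcases pairwise_le_or_pairwise_ge_of_signChanges_le_one (l := x :: t) (by simpa using h)
        with ih | ih
      · exact Or.inl (ih.cons (by simpa using (List.pairwise_cons.mp ih).1))
      · exact Or.inr (ih.cons (by simpa using (List.pairwise_cons.mp ih).1))
    · have hc := pairwise_eq_of_signChanges_eq_zero (l := y :: t) (by simp [hxy] at h; omega)
      have hy : ∀ z ∈ y :: t, z = y := fun z hz => by
        rcases List.mem_cons.mp hz with rfl | hz
        · rfl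
        · exact ((List.pairwise_cons.mp hc).1 z hz).symm
      rcases le_total x y with hle | hle
      · exact Or.inl ((hc.imp le_of_eq).cons fun z hz => hy z hz ▸ hle)
      · exact Or.inr ((hc.imp ge_of_eq).cons fun z hz => hy z hz ▸ hle)

section SignSeries

variable {α : Type*} [LinearOrder α] {s : Finset α} {f : α → Bool}

theorem monotoneOn_or_antitoneOn_of_signChanges_le_one
    (h : signChanges ((s.sort (· ≤ ·)).map f) ≤ 1) : MonotoneOn f s ∨ AntitoneOn f s := by
  have hsort := (s.sortedLT_sort).pairwise
  have key : ∀ {R : Bool → Bool → Prop}, ((s.sort (· ≤ ·)).map f).Pairwise R →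
      ∀ a ∈ s, ∀ b ∈ s, a < b → R (f a) (f b) := by
    intro R hR a ha b hb
    refine List.Pairwise.forall_of_forall_of_flip (R := fun a b => a < b → R (f a) (f b))
      (fun _ _ h => absurd h (lt_irrefl _)) ?_ ?_ ((s.mem_sort (· ≤ ·)).mpr ha)
      ((s.mem_sort (· ≤ ·)).mpr hb)
    · exact (List.pairwise_map.mp hR).imp fun h _ => by exact h
    · exact hsort.imp fun h h' => absurd (h.trans h') (lt_irrefl _)
  rcases pairwise_le_or_pairwise_ge_of_signChanges_le_one h with h | h
  · exact Or.inl fun a ha b hb hab => hab.eq_or_lt.elim (fun e => e ▸ le_rfl) (key h a ha b hb)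
  · exact Or.inr fun a ha b hb hab => hab.eq_or_lt.elim (fun e => e ▸ le_rfl) (key h a ha b hb)

theorem head?_map_sort (hs : s.Nonempty) :
    ((s.sort (· ≤ ·)).map f).head? = some (f (s.min' hs)) := by
  rw [List.head?_map, List.head?_eq_getElem?, Finset.min'_eq_sorted_zero,
    List.getElem?_eq_getElem]
  rfl

theorem getLast?_map_sort (hs : s.Nonempty) :
    ((s.sort (· ≤ ·)).map f).getLast? = some (f (s.max' hs)) := by
  rw [List.getLast?_map, List.getLast?_eq_getElem?, Finset.max'_eq_sorted_last,
    List.getElem?_eq_getElem]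
  rfl

theorem leftAligned_map_sort_iff (hs : s.Nonempty) :
    LeftAligned ((s.sort (· ≤ ·)).map f) ↔
      f (s.min' hs) = true ∧ f (s.max' hs) = false := by
  simp [LeftAligned, head?_map_sort hs, getLast?_map_sort hs]

theorem rightAligned_map_sort_iff (hs : s.Nonempty) :
    RightAligned ((s.sort (· ≤ ·)).map f) ↔
      f (s.min' hs) = false ∧ f (s.max' hs) = true := by
  simp [RightAligned, head?_map_sort hs, getLast?_map_sort hs]

theorem not_rightAligned_of_isLeast {m : α} (hm : IsLeast ↑s m) (hfm : f m = true) :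
    ¬RightAligned ((s.sort (· ≤ ·)).map f) := by
  have hs : s.Nonempty := ⟨m, hm.1⟩
  rw [rightAligned_map_sort_iff hs, ← hm.unique (s.isLeast_min' hs), hfm]
  simp

theorem not_leftAligned_of_isGreatest {m : α} (hm : IsGreatest ↑s m) (hfm : f m = true) :
    ¬LeftAligned ((s.sort (· ≤ ·)).map f) := by
  have hs : s.Nonempty := ⟨m, hm.1⟩
  rw [leftAligned_map_sort_iff hs, ← hm.unique (s.isGreatest_max' hs), hfm]
  simp

theorem LeftAligned.apply_eq_true_of_le (hf : signChanges ((s.sort (· ≤ ·)).map f) ≤ 1)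
    (hL : LeftAligned ((s.sort (· ≤ ·)).map f)) {b v : α} (hb : b ∈ s) (hfb : f b = true)
    (hv : v ∈ s) (hvb : v ≤ b) : f v = true := by
  have hs : s.Nonempty := ⟨b, hb⟩
  obtain ⟨hmin, hmax⟩ := (leftAligned_map_sort_iff hs).mp hL
  rcases monotoneOn_or_antitoneOn_of_signChanges_le_one hf with hmono | hanti
  · have := hmono (s.min'_mem hs) (s.max'_mem hs) (s.min'_le_max' hs)
    simp [Bool.le_iff_imp, hmin, hmax] at this
  · simpa [Bool.le_iff_imp, hfb] using hanti hv hb hvb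

theorem RightAligned.apply_eq_true_of_ge (hf : signChanges ((s.sort (· ≤ ·)).map f) ≤ 1)
    (hR : RightAligned ((s.sort (· ≤ ·)).map f)) {b v : α} (hb : b ∈ s) (hfb : f b = true)
    (hv : v ∈ s) (hbv : b ≤ v) : f v = true := by
  have hs : s.Nonempty := ⟨b, hb⟩
  obtain ⟨hmin, hmax⟩ := (rightAligned_map_sort_iff hs).mp hR
  rcases monotoneOn_or_antitoneOn_of_signChanges_le_one hf with hmono | hanti
  · simpa [Bool.le_iff_imp, hfb] using hmono hb hv hbv
  · have := hanti (s.min'_mem hs) (s.max'_mem hs) (s.min'_le_max' hs)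
    simp [Bool.le_iff_imp, hmin, hmax] at this

theorem leftAligned_or_rightAligned_of_signChanges_le_one
    (hf : signChanges ((s.sort (· ≤ ·)).map f) ≤ 1)
    {b v : α} (hb : b ∈ s) (hfb : f b = true) (hv : v ∈ s) (hfv : f v = false) :
    LeftAligned ((s.sort (· ≤ ·)).map f) ∨ RightAligned ((s.sort (· ≤ ·)).map f) := by
  have hs : s.Nonempty := ⟨b, hb⟩
  rw [leftAligned_map_sort_iff hs, rightAligned_map_sort_iff hs]
  rcases monotoneOn_or_antitoneOn_of_signChanges_le_one hf with hmono | hanti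
  · have hmax := hmono hb (s.max'_mem hs) (s.le_max' b hb)
    have hmin := hmono (s.min'_mem hs) hv (s.min'_le v hv)
    simp_all [Bool.le_iff_imp]
  · have hmin := hanti (s.min'_mem hs) hb (s.min'_le b hb)
    have hmax := hanti hv (s.max'_mem hs) (s.le_max' v hv)
    simp_all [Bool.le_iff_imp]

end SignSeries

theorem injOn_insert_sdiff {α : Type*} [DecidableEq α] (C s : Finset α) :
    Set.InjOn (insert · C) ↑(s \ C) :=
  fun _ hv _ _ h => (Finset.insert_inj (Finset.mem_sdiff.mp hv).2).mp h

theorem le_card_Icc_sdiff_add_card_Icc_sdiff {n b y : ℕ} {C C' : Finset ℕ} (hb : b ∉ C)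
    (hb1 : 1 ≤ b) (hbn : b ≤ n) (hC' : C' ⊆ insert y C) :
    n ≤ (Finset.Icc 1 b \ C).card + (Finset.Icc b n \ C').card + C.card := by
  have hinter : (Finset.Icc 1 b ∩ C).card + (Finset.Icc b n ∩ C').card ≤ C.card + 1 := by
    rw [← Finset.card_union_of_disjoint]
    · calc _ ≤ (insert y C).card := Finset.card_le_card
            (Finset.union_subset (Finset.inter_subset_right.trans (Finset.subset_insert _ _))
              (Finset.inter_subset_right.trans hC'))
        _ ≤ C.card + 1 := Finset.card_insert_le _ _
    · rw [Finset.disjoint_left]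
      intro z hz1 hz2
      simp only [Finset.mem_inter, Finset.mem_Icc] at hz1 hz2
      obtain rfl : z = b := by omega
      exact hb hz1.2
  have h1 := Finset.card_sdiff_add_card_inter (Finset.Icc 1 b) C
  have h2 := Finset.card_sdiff_add_card_inter (Finset.Icc b n) C'
  rw [Nat.card_Icc] at h1 h2
  omega

theorem insert_erase_ne_of_swap {B : Finset ℕ} {b x y v w : ℕ} (hx : x ∈ B) (hy : y ∉ B)
    (hbx : b ≠ x) (hby : b ≠ y) (hside : x < b ↔ y < b) (hvb : v ≤ b) (hbw : b ≤ w) :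
    insert v (B.erase b) ≠ insert w ((insert y (B.erase x)).erase b) := by
  intro hvw
  have hyv : y = v := by
    have : y ∈ insert v (B.erase b) := hvw ▸ Finset.mem_insert_of_mem
      (Finset.mem_erase.mpr ⟨hby.symm, Finset.mem_insert_self y _⟩)
    simpa [hy] using this
  have hxw : x = w := by
    have : x ∈ insert w ((insert y (B.erase x)).erase b) := hvw ▸ Finset.mem_insert_of_mem
      (Finset.mem_erase.mpr ⟨hbx.symm, hx⟩)
    have hxy : x ≠ y := fun h => hy (h ▸ hx)
    simpa [hxy] using this
  omega

theorem sub_le_ncard_of_Icc_subset_image {α : Type*} {C : Set α} (hC : C.Finite) {f : α → ℕ}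
    {a b : ℕ} (h : ∀ v, a ≤ v → v ≤ b → v ∈ f '' C) : b + 1 - a ≤ C.ncard :=
  calc b + 1 - a = (↑(Finset.Icc a b) : Set ℕ).ncard := by
        rw [Set.ncard_coe_finset, Nat.card_Icc]
    _ ≤ (f '' C).ncard := Set.ncard_le_ncard (fun v hv => by
        rw [Finset.coe_Icc] at hv
        exact h v hv.1 hv.2) (hC.image f)
    _ ≤ C.ncard := Set.ncard_image_le hC

section NthElt

variable {B : Finset ℕ} {j : ℕ}

theorem nthElt_eq_orderEmbOfFin (hj1 : 1 ≤ j) (hj : j ≤ B.card) :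
    nthElt B j = B.orderEmbOfFin rfl ⟨j - 1, by omega⟩ := by
  rw [Finset.orderEmbOfFin_apply]
  exact List.getD_eq_getElem _ _ _

theorem nthElt_mem (hj1 : 1 ≤ j) (hj : j ≤ B.card) : nthElt B j ∈ B := by
  rw [nthElt_eq_orderEmbOfFin hj1 hj]
  exact B.orderEmbOfFin_mem rfl _

theorem strictMonoOn_nthElt (B : Finset ℕ) : StrictMonoOn (nthElt B) (Set.Icc 1 B.card) := by
  rintro j ⟨hj1, hj⟩ k ⟨hk1, hk⟩ hjk
  rw [nthElt_eq_orderEmbOfFin hj1 hj, nthElt_eq_orderEmbOfFin hk1 hk]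
  exact (B.orderEmbOfFin rfl).strictMono (Fin.mk_lt_mk.mpr (by omega))

theorem exists_nthElt_eq {b : ℕ} (hb : b ∈ B) :
    ∃ j, 1 ≤ j ∧ j ≤ B.card ∧ nthElt B j = b := by
  obtain ⟨⟨k, hk⟩, hkb⟩ : b ∈ Set.range (B.orderEmbOfFin rfl) := by
    rw [Finset.range_orderEmbOfFin]; exact hb
  refine ⟨k + 1, by omega, by omega, ?_⟩
  rw [nthElt_eq_orderEmbOfFin (by omega) (by omega)]
  exact hkb

theorem nthElt_eq_of_strictMonoOn {g : ℕ → ℕ} (hg : StrictMonoOn g (Set.Icc 1 B.card))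
    (hgB : ∀ j, 1 ≤ j → j ≤ B.card → g j ∈ B) (hj1 : 1 ≤ j) (hj : j ≤ B.card) :
    nthElt B j = g j := by
  have huniq := Finset.orderEmbOfFin_unique (s := B) rfl (f := fun k => g (k + 1))
    (fun k => hgB _ (by omega) (by omega))
    (fun k l hkl => hg ⟨by omega, by omega⟩ ⟨by omega, by omega⟩
      (by have := Fin.lt_def.mp hkl; omega))
  rw [nthElt_eq_orderEmbOfFin hj1 hj, ← huniq]
  exact congrArg g (show j - 1 + 1 = j by omega)

theorem nthElt_insert_erase {x y : ℕ} (hx : x ∈ B) (hy : y ∉ B)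
    (hgap : ∀ z ∈ B.erase x, ¬(min x y < z ∧ z < max x y))
    (hj1 : 1 ≤ j) (hj : j ≤ B.card) :
    nthElt (insert y (B.erase x)) j = if nthElt B j = x then y else nthElt B j := by
  have hcard : (insert y (B.erase x)).card = B.card := by
    rw [Finset.card_insert_of_notMem (fun h => hy (Finset.mem_of_mem_erase h)),
      Finset.card_erase_add_one hx]
  rw [← hcard] at hj
  refine nthElt_eq_of_strictMonoOn (g := fun k => if nthElt B k = x then y else nthElt B k)
    ?_ ?_ hj1 hj
  · intro k hk l hl hkl
    have hlt := strictMonoOn_nthElt B (by rwa [hcard] at hk) (by rwa [hcard] at hl) hkl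
    have hkB := nthElt_mem hk.1 (hcard ▸ hk.2)
    have hlB := nthElt_mem hl.1 (hcard ▸ hl.2)
    have hyk : nthElt B k ≠ y := fun h => hy (h ▸ hkB)
    have hyl : nthElt B l ≠ y := fun h => hy (h ▸ hlB)
    beta_reduce
    split_ifs with h1 h2 h2
    · omega
    · have := hgap _ (Finset.mem_erase.mpr ⟨h2, hlB⟩); omega
    · have := hgap _ (Finset.mem_erase.mpr ⟨h1, hkB⟩); omega
    · exact hlt
  · intro k hk1 hk
    split_ifs with h
    · exact Finset.mem_insert_self _ _
    · exact Finset.mem_insert_of_mem (Finset.mem_erase.mpr ⟨h, nthElt_mem hk1 (hcard ▸ hk)⟩)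

theorem nthElt_pred_eq_of_mem {v : ℕ} (hv : v ∈ B) (hj1 : 1 ≤ j) (hj : j ≤ B.card)
    (hvj : v + 1 = nthElt B j) : 2 ≤ j ∧ nthElt B (j - 1) = v := by
  obtain ⟨k, hk1, hk, rfl⟩ := exists_nthElt_eq hv
  have hmono := strictMonoOn_nthElt B
  have hkj : k < j := (hmono.lt_iff_lt ⟨hk1, hk⟩ ⟨hj1, hj⟩).mp (by omega)
  refine ⟨by omega, ?_⟩
  rcases (show k = j - 1 ∨ k < j - 1 by omega) with rfl | hlt
  · rfl
  · have h1 := hmono ⟨hk1, hk⟩ ⟨by omega, by omega⟩ hlt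
    have h2 := hmono ⟨by omega, by omega⟩ ⟨hj1, hj⟩ (show j - 1 < j by omega)
    omega

theorem nthElt_succ_eq_of_mem {v : ℕ} (hv : v ∈ B) (hj1 : 1 ≤ j) (hj : j ≤ B.card)
    (hvj : nthElt B j + 1 = v) : j < B.card ∧ nthElt B (j + 1) = v := by
  obtain ⟨k, hk1, hk, rfl⟩ := exists_nthElt_eq hv
  have hmono := strictMonoOn_nthElt B
  have hjk : j < k := (hmono.lt_iff_lt ⟨hj1, hj⟩ ⟨hk1, hk⟩).mp (by omega)
  refine ⟨by omega, ?_⟩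
  rcases (show k = j + 1 ∨ j + 1 < k by omega) with rfl | hlt
  · rfl
  · have h1 := hmono ⟨by omega, by omega⟩ ⟨hk1, hk⟩ hlt
    have h2 := hmono ⟨hj1, hj⟩ ⟨by omega, by omega⟩ (show j < j + 1 by omega)
    omega

theorem nthElt_insert_erase_nthElt {S : Finset ℕ} {k y : ℕ} (hk1 : 1 ≤ k) (hk : k ≤ S.card)
    (hy : y ∉ S)
    (hgap : ∀ z ∈ S.erase (nthElt S k), ¬(min (nthElt S k) y < z ∧ z < max (nthElt S k) y))
    {t : ℕ} (ht1 : 1 ≤ t) (ht : t ≤ S.card) :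
    nthElt (insert y (S.erase (nthElt S k))) t = if t = k then y else nthElt S t := by
  rw [nthElt_insert_erase (nthElt_mem hk1 hk) hy hgap ht1 ht]
  exact if_congr ((strictMonoOn_nthElt S).injOn.eq_iff ⟨ht1, ht⟩ ⟨hk1, hk⟩) rfl rfl

end NthElt

theorem card_sourceSubset {n d i : ℕ} (hi : i ≤ d) (hd : d ≤ n) :
    (sourceSubset n d i).card = d := by
  rw [sourceSubset, Finset.card_union_of_disjoint, Nat.card_Icc, Nat.card_Icc]
  · omega
  · rw [Finset.disjoint_left]
    intro z hz1 hz2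
    simp only [Finset.mem_Icc] at hz1 hz2
    omega

theorem nthElt_sourceSubset {n d i j : ℕ} (hi : i ≤ d) (hd : d ≤ n) (hj1 : 1 ≤ j)
    (hj : j ≤ d) :
    nthElt (sourceSubset n d i) j = if j ≤ i then j else n - d + j := by
  have hcard := card_sourceSubset (n := n) hi hd
  refine nthElt_eq_of_strictMonoOn (g := fun k => if k ≤ i then k else n - d + k) ?_ ?_
    hj1 (by omega)
  · intro k hk l hl hkl
    dsimp only
    split_ifs <;> omega
  · intro k hk1 hk
    rw [hcard] at hk
    simp only [sourceSubset, Finset.mem_union, Finset.mem_Icc]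
    split_ifs <;> omega

def SeriesAligned (n d i : ℕ) (τ : Finset ℕ → Bool) (B : Finset ℕ) : Prop :=
  ∀ j, 1 ≤ j → j ≤ d →
    (j ≤ i → LeftAligned (series n τ (B.erase (nthElt B j)))) ∧
    (i < j → RightAligned (series n τ (B.erase (nthElt B j))))

namespace IsCoSignotope

variable {n d i : ℕ} {τ : Finset ℕ → Bool}

theorem finite_setOf (hτ : IsCoSignotope n d τ) : {A | τ A = true}.Finite :=
  (Finset.Icc 1 n).powerset.finite_toSet.subset fun A hA =>
    Finset.mem_powerset.mpr (hτ.1 A hA).1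

theorem card_le_plusCount (hτ : IsCoSignotope n d τ) {F : Finset (Finset ℕ)}
    (hF : ∀ A ∈ F, τ A = true) : F.card ≤ plusCount τ := by
  rw [← Set.ncard_coe_finset]
  exact Set.ncard_le_ncard hF hτ.finite_setOf

theorem signChanges_series_le_one (hτ : IsCoSignotope n d τ) {B : Finset ℕ} (hB : τ B = true)
    {b : ℕ} (hb : b ∈ B) : signChanges (series n τ (B.erase b)) ≤ 1 :=
  hτ.2 B (hτ.1 B hB).1 (hτ.1 B hB).2 b hb

theorem mem_sdiff_erase (hτ : IsCoSignotope n d τ) {B : Finset ℕ} (hB : τ B = true)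
    {b : ℕ} (hb : b ∈ B) : b ∈ Finset.Icc 1 n \ B.erase b :=
  Finset.mem_sdiff.mpr ⟨(hτ.1 B hB).1 hb, Finset.notMem_erase b B⟩

theorem apply_insert_of_leftAligned (hτ : IsCoSignotope n d τ) {B : Finset ℕ}
    (hB : τ B = true) {b : ℕ} (hb : b ∈ B) (hL : LeftAligned (series n τ (B.erase b)))
    {v : ℕ} (hv : v ∈ Finset.Icc 1 n \ B.erase b) (hvb : v ≤ b) :
    τ (insert v (B.erase b)) = true :=
  LeftAligned.apply_eq_true_of_le (hτ.signChanges_series_le_one hB hb) hL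
    (hτ.mem_sdiff_erase hB hb) (by rwa [Finset.insert_erase hb]) hv hvb

theorem apply_insert_of_rightAligned (hτ : IsCoSignotope n d τ) {B : Finset ℕ}
    (hB : τ B = true) {b : ℕ} (hb : b ∈ B) (hR : RightAligned (series n τ (B.erase b)))
    {v : ℕ} (hv : v ∈ Finset.Icc 1 n \ B.erase b) (hbv : b ≤ v) :
    τ (insert v (B.erase b)) = true :=
  RightAligned.apply_eq_true_of_ge (hτ.signChanges_series_le_one hB hb) hR
    (hτ.mem_sdiff_erase hB hb) (by rwa [Finset.insert_erase hb]) hv hbv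

theorem leftAligned_or_rightAligned (hτ : IsCoSignotope n d τ) (hp : plusCount τ + d ≤ n)
    {B : Finset ℕ} (hB : τ B = true) {b : ℕ} (hb : b ∈ B) :
    LeftAligned (series n τ (B.erase b)) ∨ RightAligned (series n τ (B.erase b)) := by
  obtain ⟨hBsub, hBcard⟩ := hτ.1 B hB
  obtain ⟨v, hv, hfv⟩ :
      ∃ v ∈ Finset.Icc 1 n \ B.erase b, τ (insert v (B.erase b)) = false := by
    by_contra! hall
    have hcard := hτ.card_le_plusCount
      (F := (Finset.Icc 1 n \ B.erase b).image (insert · (B.erase b)))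
      (by simpa only [Finset.forall_mem_image, ne_eq, Bool.not_eq_false] using hall)
    rw [Finset.card_image_of_injOn (injOn_insert_sdiff _ _),
      Finset.card_sdiff_of_subset ((B.erase_subset b).trans hBsub), Nat.card_Icc,
      Finset.card_erase_of_mem hb] at hcard
    have := Finset.card_pos.mpr ⟨b, hb⟩
    omega
  exact leftAligned_or_rightAligned_of_signChanges_le_one (hτ.signChanges_series_le_one hB hb)
    (hτ.mem_sdiff_erase hB hb) (by rwa [Finset.insert_erase hb]) hv hfv

theorem not_leftAligned_and_rightAligned_of_swap (hτ : IsCoSignotope n d τ)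
    (hp : plusCount τ + d ≤ n) {B : Finset ℕ} {b x y : ℕ} (hB : τ B = true)
    (hB' : τ (insert y (B.erase x)) = true) (hx : x ∈ B) (hy : y ∉ B) (hb : b ∈ B)
    (hbx : b ≠ x) (hby : b ≠ y) (hside : x < b ↔ y < b)
    (hL : LeftAligned (series n τ (B.erase b)))
    (hR : RightAligned (series n τ ((insert y (B.erase x)).erase b))) : False := by
  set B' := insert y (B.erase x)
  set C := B.erase b
  set C' := B'.erase b
  have hbB' : b ∈ B' := Finset.mem_insert_of_mem (Finset.mem_erase.mpr ⟨hbx, hb⟩)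
  obtain ⟨hBsub, hBcard⟩ := hτ.1 B hB
  have hb1n := Finset.mem_Icc.mp (hBsub hb)
  have hC'sub : C' ⊆ insert y C := by
    intro z hz
    simp only [C', C, B', Finset.mem_erase, Finset.mem_insert] at hz ⊢
    tauto
  -- `C ∪ {v}` for `v ≤ b` and `C' ∪ {w}` for `w ≥ b` are at least `n - d + 1` `+`-subsets.
  set F := (Finset.Icc 1 b \ C).image (insert · C)
  set F' := (Finset.Icc b n \ C').image (insert · C')
  have hplus : ∀ A ∈ F ∪ F', τ A = true := by
    simp only [Finset.forall_mem_union, F, F', Finset.forall_mem_image, Finset.mem_sdiff,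
      Finset.mem_Icc]
    refine ⟨fun v hv => ?_, fun w hw => ?_⟩
    · exact hτ.apply_insert_of_leftAligned hB hb hL
        (Finset.mem_sdiff.mpr ⟨Finset.mem_Icc.mpr ⟨hv.1.1, by omega⟩, hv.2⟩) hv.1.2
    · exact hτ.apply_insert_of_rightAligned hB' hbB' hR
        (Finset.mem_sdiff.mpr ⟨Finset.mem_Icc.mpr ⟨by omega, hw.1.2⟩, hw.2⟩) hw.1.1
  have hdisj : Disjoint F F' := by
    simp only [F, F', Finset.disjoint_left, Finset.mem_image, Finset.mem_sdiff, Finset.mem_Icc]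
    rintro _ ⟨v, ⟨⟨-, hvb⟩, -⟩, rfl⟩ ⟨w, ⟨⟨hbw, -⟩, -⟩, hvw⟩
    exact insert_erase_ne_of_swap hx hy hbx hby hside hvb hbw hvw.symm
  have hcard := hτ.card_le_plusCount hplus
  rw [Finset.card_union_of_disjoint hdisj, Finset.card_image_of_injOn (injOn_insert_sdiff _ _),
    Finset.card_image_of_injOn (injOn_insert_sdiff _ _)] at hcard
  have hcount := le_card_Icc_sdiff_add_card_Icc_sdiff (C := C) (Finset.notMem_erase b B)
    hb1n.1 hb1n.2 hC'sub
  have hC : C.card + 1 = d := by rw [Finset.card_erase_add_one hb, hBcard]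
  omega

theorem aligned_insert_erase (hτ : IsCoSignotope n d τ) (hp : plusCount τ + d ≤ n)
    {S : Finset ℕ} {b x y : ℕ} (hS : τ S = true) (hT : τ (insert y (S.erase x)) = true)
    (hx : x ∈ S) (hy : y ∉ S) (hb : b ∈ S) (hbx : b ≠ x) (hby : b ≠ y)
    (hside : x < b ↔ y < b) :
    (LeftAligned (series n τ (S.erase b)) →
        LeftAligned (series n τ ((insert y (S.erase x)).erase b))) ∧
      (RightAligned (series n τ (S.erase b)) →
        RightAligned (series n τ ((insert y (S.erase x)).erase b))) := by
  have hbT : b ∈ insert y (S.erase x) :=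
    Finset.mem_insert_of_mem (Finset.mem_erase.mpr ⟨hbx, hb⟩)
  have hyT : y ∈ insert y (S.erase x) := Finset.mem_insert_self y _
  have hxT : x ∉ insert y (S.erase x) := by
    have hxy : x ≠ y := fun h => hy (h ▸ hx)
    simp [hxy]
  have hST : insert x ((insert y (S.erase x)).erase y) = S := by
    rw [Finset.erase_insert (fun h => hy (Finset.mem_of_mem_erase h)), Finset.insert_erase hx]
  rcases hτ.leftAligned_or_rightAligned hp hT hbT with hL | hR
  · refine ⟨fun _ => hL, fun hR => (hτ.not_leftAligned_and_rightAligned_of_swap hp hT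
      (hST.symm ▸ hS) hyT hxT hbT hby hbx hside.symm hL (hST.symm ▸ hR)).elim⟩
  · exact ⟨fun hL => (hτ.not_leftAligned_and_rightAligned_of_swap hp hS hT hx hy hb hbx hby
      hside hL hR).elim, fun _ => hR⟩

theorem seriesAligned_of_gAdj (hτ : IsCoSignotope n d τ) (hp : plusCount τ + d ≤ n)
    {S T : Finset ℕ} (hS : τ S = true) (hT : τ T = true) (hadj : GAdj n d S T)
    (h : SeriesAligned n d i τ S) : SeriesAligned n d i τ T := by
  obtain ⟨-, hScard, -, -, x, hx, y, -, hy, rfl, hgap⟩ := hadj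
  intro j hj1 hjd
  rw [nthElt_insert_erase hx hy hgap hj1 (by omega)]
  split_ifs with hjx
  · rw [Finset.erase_insert (fun h => hy (Finset.mem_of_mem_erase h)), ← hjx]
    exact h j hj1 hjd
  · have hb := nthElt_mem (B := S) hj1 (by omega)
    have hby : nthElt S j ≠ y := fun h => hy (h ▸ hb)
    have hside : x < nthElt S j ↔ y < nthElt S j := by
      have := hgap _ (Finset.mem_erase.mpr ⟨hjx, hb⟩)
      omega
    have htransfer := hτ.aligned_insert_erase hp hS hT hx hy hb hjx hby hside
    exact ⟨fun hji => htransfer.1 ((h j hj1 hjd).1 hji),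
      fun hij => htransfer.2 ((h j hj1 hjd).2 hij)⟩

theorem seriesAligned_sourceSubset (hτ : IsCoSignotope n d τ) (hp : plusCount τ + d ≤ n)
    (hi : i ≤ d) (hsrc : τ (sourceSubset n d i) = true) :
    SeriesAligned n d i τ (sourceSubset n d i) := by
  set S := sourceSubset n d i
  have hS : ∀ z, z ∈ S ↔ (1 ≤ z ∧ z ≤ i) ∨ (n - d + i + 1 ≤ z ∧ z ≤ n) := by
    simp [S, sourceSubset]
  have hsrc' : ∀ b ∈ S, τ (insert b (S.erase b)) = true := fun b hb => by
    rwa [Finset.insert_erase hb]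
  intro j hj1 hjd
  rw [nthElt_sourceSubset hi (by omega) hj1 hjd]
  constructor
  · intro hji
    rw [if_pos hji]
    have hjS : j ∈ S := (hS j).mpr (Or.inl ⟨hj1, hji⟩)
    have hleast : IsLeast ↑(Finset.Icc 1 n \ S.erase j) j := by
      simp only [IsLeast, lowerBounds, Finset.coe_sdiff, Set.mem_sdiff, Finset.mem_coe,
        Finset.mem_Icc, Finset.mem_erase, hS, Set.mem_ofPred_eq]
      exact ⟨by omega, fun v hv => by omega⟩
    exact (hτ.leftAligned_or_rightAligned hp hsrc hjS).resolve_right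
      (not_rightAligned_of_isLeast hleast (hsrc' j hjS))
  · intro hij
    rw [if_neg (by omega)]
    have hjS : n - d + j ∈ S := (hS _).mpr (Or.inr ⟨by omega, by omega⟩)
    have hgreatest : IsGreatest ↑(Finset.Icc 1 n \ S.erase (n - d + j)) (n - d + j) := by
      simp only [IsGreatest, upperBounds, Finset.coe_sdiff, Set.mem_sdiff, Finset.mem_coe,
        Finset.mem_Icc, Finset.mem_erase, hS, Set.mem_ofPred_eq]
      exact ⟨by omega, fun v hv => by omega⟩
    exact (hτ.leftAligned_or_rightAligned hp hsrc hjS).resolve_left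
      (not_leftAligned_of_isGreatest hgreatest (hsrc' _ hjS))

theorem finite_comp (hτ : IsCoSignotope n d τ) : (comp n d τ i).Finite :=
  hτ.finite_setOf.subset fun _ hB => hB.2.1

theorem card_of_mem_comp (hτ : IsCoSignotope n d τ) {B : Finset ℕ} (hB : B ∈ comp n d τ i) :
    B.card = d :=
  (hτ.1 B hB.2.1).2

theorem seriesAligned_of_mem_comp (hτ : IsCoSignotope n d τ) (hp : plusCount τ + d ≤ n)
    (hi : i ≤ d) {B : Finset ℕ} (hB : B ∈ comp n d τ i) : SeriesAligned n d i τ B := by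
  obtain ⟨hsrc, -, hconn⟩ := hB
  induction hconn with
  | refl => exact hτ.seriesAligned_sourceSubset hp hi hsrc
  | tail _ hstep ih => exact hτ.seriesAligned_of_gAdj hp hstep.1 hstep.2.1 hstep.2.2 ih

theorem exists_mem_comp_nthElt_eq_of_adjacent (hτ : IsCoSignotope n d τ) {S : Finset ℕ}
    (hS : S ∈ comp n d τ i) {k y : ℕ} (hk1 : 1 ≤ k) (hkd : k ≤ d)
    (hyn : y ∈ Finset.Icc 1 n) (hyS : y ∉ S) (hy : y + 1 = nthElt S k ∨ nthElt S k + 1 = y)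
    (hT : τ (insert y (S.erase (nthElt S k))) = true) :
    ∃ T ∈ comp n d τ i, nthElt T k = y ∧
      ∀ t, 1 ≤ t → t ≤ d → t ≠ k → nthElt T t = nthElt S t := by
  have hScard := hτ.card_of_mem_comp hS
  have hgap : ∀ z ∈ S.erase (nthElt S k),
      ¬(min (nthElt S k) y < z ∧ z < max (nthElt S k) y) := fun z _ => by omega
  have hadj : GAdj n d S (insert y (S.erase (nthElt S k))) :=
    ⟨(hτ.1 S hS.2.1).1, hScard, (hτ.1 _ hT).1, (hτ.1 _ hT).2, nthElt S k,
      nthElt_mem hk1 (by omega), y, hyn, hyS, rfl, hgap⟩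
  refine ⟨_, ⟨hS.1, hT, hS.2.2.tail ⟨hS.2.1, hT, hadj⟩⟩, ?_, fun t ht1 htd htk => ?_⟩
  · rw [nthElt_insert_erase_nthElt hk1 (by omega) hyS hgap hk1 (by omega), if_pos rfl]
  · rw [nthElt_insert_erase_nthElt hk1 (by omega) hyS hgap ht1 (by omega), if_neg htk]

theorem exists_mem_comp_nthElt_eq_of_le (hτ : IsCoSignotope n d τ) (hp : plusCount τ + d ≤ n)
    (hi : i ≤ d) {k : ℕ} (hk1 : 1 ≤ k) (hki : k ≤ i) {S : Finset ℕ}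
    (hS : S ∈ comp n d τ i)
    {v : ℕ} (hkv : k ≤ v) (hvS : v ≤ nthElt S k) :
    ∃ T ∈ comp n d τ i, nthElt T k = v ∧
      ∀ t, k < t → t ≤ d → nthElt T t = nthElt S t := by
  induction hvS using Nat.decreasingInduction with
  | self => exact ⟨S, hS, rfl, fun _ _ _ => rfl⟩
  | of_succ v _ ih =>
    obtain ⟨T, hT, hTk, hTS⟩ := ih (by omega)
    have hTcard := hτ.card_of_mem_comp hT
    -- if `v` is occupied by the `(k-1)`-st element, first push that element down to `v - 1`
    obtain ⟨U, hU, hUk, hUT, hvU⟩ : ∃ U ∈ comp n d τ i, nthElt U k = v + 1 ∧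
        (∀ t, k < t → t ≤ d → nthElt U t = nthElt T t) ∧ v ∉ U := by
      by_cases hvT : v ∈ T
      · obtain ⟨hk2, hTk'⟩ := nthElt_pred_eq_of_mem hvT hk1 (by omega) hTk.symm
        obtain ⟨U, hU, hUk', hUT⟩ := hτ.exists_mem_comp_nthElt_eq_of_le hp hi (k := k - 1)
          (by omega) (by omega) hT (v := v - 1) (by omega) (by omega)
        have hUk : nthElt U k = v + 1 := by rw [hUT k (by omega) (by omega), hTk]
        refine ⟨U, hU, hUk, fun t h1 h2 => hUT t (by omega) h2, fun hvU => ?_⟩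
        have := (nthElt_pred_eq_of_mem hvU hk1 (by rw [hτ.card_of_mem_comp hU]; omega)
          hUk.symm).2
        omega
      · exact ⟨T, hT, hTk, fun _ _ _ => rfl, hvT⟩
    have hUcard := hτ.card_of_mem_comp hU
    have hL := ((hτ.seriesAligned_of_mem_comp hp hi hU) k hk1 (by omega)).1 hki
    have hvn : v ∈ Finset.Icc 1 n := by
      have := (hτ.1 U hU.2.1).1 (nthElt_mem hk1 (by omega))
      rw [hUk, Finset.mem_Icc] at this
      exact Finset.mem_Icc.mpr ⟨by omega, by omega⟩
    have hplus := hτ.apply_insert_of_leftAligned hU.2.1 (nthElt_mem hk1 (by omega)) hL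
      (Finset.mem_sdiff.mpr ⟨hvn, fun h => hvU (Finset.mem_of_mem_erase h)⟩) (by omega)
    obtain ⟨W, hW, hWk, hWU⟩ :=
      hτ.exists_mem_comp_nthElt_eq_of_adjacent hU hk1 (by omega) hvn hvU
      (Or.inl hUk.symm) hplus
    exact ⟨W, hW, hWk, fun t h1 h2 => by
      rw [hWU t (by omega) h2 (by omega), hUT t h1 h2, hTS t h1 h2]⟩
termination_by k

theorem exists_mem_comp_nthElt_eq_of_ge (hτ : IsCoSignotope n d τ) (hp : plusCount τ + d ≤ n)
    (hi : i ≤ d) {k : ℕ} (hik : i < k) (hkd : k ≤ d) {S : Finset ℕ}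
    (hS : S ∈ comp n d τ i)
    {v : ℕ} (hSv : nthElt S k ≤ v) (hvn : v + (d - k) ≤ n) :
    ∃ T ∈ comp n d τ i, nthElt T k = v ∧
      ∀ t, 1 ≤ t → t < k → nthElt T t = nthElt S t := by
  induction v, hSv using Nat.le_induction with
  | base => exact ⟨S, hS, rfl, fun _ _ _ => rfl⟩
  | succ v _ ih =>
    obtain ⟨T, hT, hTk, hTS⟩ := ih (by omega)
    have hTcard := hτ.card_of_mem_comp hT
    -- if `v + 1` is occupied by the `(k+1)`-st element, first push that element up to `v + 2`
    obtain ⟨U, hU, hUk, hUT, hvU⟩ : ∃ U ∈ comp n d τ i, nthElt U k = v ∧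
        (∀ t, 1 ≤ t → t < k → nthElt U t = nthElt T t) ∧ v + 1 ∉ U := by
      by_cases hvT : v + 1 ∈ T
      · obtain ⟨hkd', hTk'⟩ :=
          nthElt_succ_eq_of_mem (j := k) hvT (by omega) (by omega) (by rw [hTk])
        obtain ⟨U, hU, hUk', hUT⟩ := hτ.exists_mem_comp_nthElt_eq_of_ge hp hi (k := k + 1)
          (by omega) (by omega) hT (v := v + 2) (by omega) (by omega)
        have hUk : nthElt U k = v := by rw [hUT k (by omega) (by omega), hTk]
        refine ⟨U, hU, hUk, fun t h1 h2 => hUT t h1 (by omega), fun hvU => ?_⟩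
        have := (nthElt_succ_eq_of_mem (j := k) hvU (by omega)
          (by rw [hτ.card_of_mem_comp hU]; omega) (by rw [hUk])).2
        omega
      · exact ⟨T, hT, hTk, fun _ _ _ => rfl, hvT⟩
    have hUcard := hτ.card_of_mem_comp hU
    have hR := ((hτ.seriesAligned_of_mem_comp hp hi hU) k (by omega) hkd).2 hik
    have hvn : v + 1 ∈ Finset.Icc 1 n := Finset.mem_Icc.mpr ⟨by omega, by omega⟩
    have hplus := hτ.apply_insert_of_rightAligned hU.2.1 (nthElt_mem (by omega) (by omega)) hR
      (Finset.mem_sdiff.mpr ⟨hvn, fun h => hvU (Finset.mem_of_mem_erase h)⟩) (by omega)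
    obtain ⟨W, hW, hWk, hWU⟩ := hτ.exists_mem_comp_nthElt_eq_of_adjacent hU (by omega) hkd hvn
      hvU (Or.inr (by rw [hUk])) hplus
    exact ⟨W, hW, hWk, fun t h1 h2 => by
      rw [hWU t h1 (by omega) (by omega), hUT t h1 h2, hTS t h1 h2]⟩
termination_by d - k

end IsCoSignotope

theorem statement6_general (n d c p i : ℕ) (hcp : c ≤ p)
    (hp : p + d ≤ n) (hi : i ≤ d)
    (τ : Finset ℕ → Bool) (hτ : τ ∈ coSigSet n d p)
    (hsize : (comp n d τ i).ncard = c)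
    (B : Finset ℕ) (hB : B ∈ comp n d τ i) :
    (∀ j, 1 ≤ j → j ≤ i →
      nthElt B j ≤ c + j - 1 ∧ LeftAligned (series n τ (B.erase (nthElt B j)))) ∧
    (∀ j, i + 1 ≤ j → j ≤ d →
      n - (c + d - j) + 1 ≤ nthElt B j ∧
        RightAligned (series n τ (B.erase (nthElt B j)))) := by
  obtain ⟨hτ, rfl⟩ := hτ
  have haligned := hτ.seriesAligned_of_mem_comp hp hi hB
  refine ⟨fun j hj1 hji => ⟨?_, (haligned j hj1 (by omega)).1 hji⟩,
    fun j hij hjd => ⟨?_, (haligned j (by omega) hjd).2 hij⟩⟩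
  · have := sub_le_ncard_of_Icc_subset_image hτ.finite_comp (f := (nthElt · j))
      (a := j) (b := nthElt B j) fun v hjv hvB =>
      let ⟨T, hT, hTv, _⟩ := hτ.exists_mem_comp_nthElt_eq_of_le hp hi hj1 hji hB hjv hvB
      ⟨T, hT, hTv⟩
    omega
  · have := sub_le_ncard_of_Icc_subset_image hτ.finite_comp (f := (nthElt · j))
      (a := nthElt B j) (b := n - (d - j)) fun v hBv hvn =>
      let ⟨T, hT, hTv, _⟩ := hτ.exists_mem_comp_nthElt_eq_of_ge hp hi hij hjd hB hBv
        (show v + (d - j) ≤ n by omega)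
      ⟨T, hT, hTv⟩
    omega

/-- **Lemma.** If `𝒞^τ_i` has size `c` and contains the `+`-subset `B = (b_1 < … < b_d)`,
then for `j ∈ [i]` we have `b_j ≤ c + j - 1` and the `(τ,B,j)`-series is left-aligned,
and for `j ∈ [i+1,d]` we have `b_j ≥ n - (c + d - j) + 1` and the `(τ,B,j)`-series is
right-aligned. -/
theorem statement6 (n d c p i : ℕ) (hdn : d < n) (hc : 1 ≤ c) (hcp : c ≤ p)
    (hp : p + d ≤ n) (hi : i ≤ d)
    (τ : Finset ℕ → Bool) (hτ : τ ∈ coSigSet n d p)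
    (hsize : (comp n d τ i).ncard = c)
    (B : Finset ℕ) (hB : B ∈ comp n d τ i) :
    (∀ j, 1 ≤ j → j ≤ i →
      nthElt B j ≤ c + j - 1 ∧ LeftAligned (series n τ (B.erase (nthElt B j)))) ∧
    (∀ j, i + 1 ≤ j → j ≤ d →
      n - (c + d - j) + 1 ≤ nthElt B j ∧
        RightAligned (series n τ (B.erase (nthElt B j)))) :=
  statement6_general n d c p i hcp hp hi τ hτ hsize B hB
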